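/- arXiv:1901.10528 — 2 statements merged into one kernel-verified Lean document; each statement's English description precedes it below -/
import Mathlib

section
/- For all natural numbers n ≥ 1 and integers k with 3 ≤ k ≤ n, define B{n,k} := (1/((k-1)!·(n-k)!)) · ∫₀^π (sin x)^(k-1) x^(n-k) dx. Then B{n,k-2} - B{n,k} = (k-1)² · B{n+2,k}. -/
/-!
Write `I(a, b) = ∫₀^π sin^a x · x^b dx`. The functions `sin^(a+1) x · cos x · x^(b+1)` and
`sin^(a+1) x · x^(b+1)` vanish at `0` and `π`, so their derivatives integrate to zero. With
`cos² = 1 - sin²` this gives two relations between `I` and the mixed moments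
`∫₀^π sin^a x · cos x · x^b dx`; eliminating the mixed moment yields
`(l+2)(l+1) I(l, m+2) = (l+2)² I(l+2, m+2) + (m+2)(m+1) I(l+2, m)`,
which is the recurrence for `k = l + 3`, `n = l + m + 3` once the factorials are cleared.
-/

open Real intervalIntegral
open scoped Nat

/-- The normalized sine-moment integral `B{n,k}` from the paper. -/
noncomputable def B (n k : ℕ) : ℝ :=
  (1 / (((k - 1).factorial : ℝ) * ((n - k).factorial : ℝ))) *
    ∫ x in (0:ℝ)..π, Real.sin x ^ (k - 1) * x ^ (n - k)

noncomputable def sinMoment (a b : ℕ) : ℝ := ∫ x in (0:ℝ)..π, sin x ^ a * x ^ b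

noncomputable def sinCosMoment (a b : ℕ) : ℝ := ∫ x in (0:ℝ)..π, sin x ^ a * cos x * x ^ b

lemma integral_eq_zero_of_hasDerivAt_of_eq_zero {F f : ℝ → ℝ} {a b : ℝ}
    (hF : ∀ x, HasDerivAt F (f x) x) (hf : Continuous f) (ha : F a = 0) (hb : F b = 0) :
    ∫ x in a..b, f x = 0 := by
  rw [integral_eq_sub_of_hasDerivAt (fun x _ => hF x) (hf.intervalIntegrable _ _), ha, hb,
    sub_zero]

lemma hasDerivAt_sin_pow_succ (a : ℕ) (x : ℝ) :
    HasDerivAt (fun x => sin x ^ (a + 1)) ((a + 1) * sin x ^ a * cos x) x := by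
  simpa using (hasDerivAt_sin x).fun_pow (a + 1)

lemma intervalIntegrable_sin_pow_mul_pow (a b : ℕ) :
    IntervalIntegrable (fun x => sin x ^ a * x ^ b) MeasureTheory.volume 0 π :=
  (by fun_prop : Continuous fun x => sin x ^ a * x ^ b).intervalIntegrable _ _

lemma intervalIntegrable_sin_pow_mul_cos_mul_pow (a b : ℕ) :
    IntervalIntegrable (fun x => sin x ^ a * cos x * x ^ b) MeasureTheory.volume 0 π :=
  (by fun_prop : Continuous fun x => sin x ^ a * cos x * x ^ b).intervalIntegrable _ _

lemma succ_mul_sinCosMoment_succ (a b : ℕ) :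
    (a + 1) * sinCosMoment a (b + 1) = -((b + 1) * sinMoment (a + 1) b) := by
  have hG : ∀ x, HasDerivAt (fun x => sin x ^ (a + 1) * x ^ (b + 1))
      ((a + 1) * (sin x ^ a * cos x * x ^ (b + 1)) + (b + 1) * (sin x ^ (a + 1) * x ^ b)) x := by
    intro x
    refine ((hasDerivAt_sin_pow_succ a x).fun_mul (hasDerivAt_pow (b + 1) x)).congr_deriv ?_
    push_cast
    ring
  have h := integral_eq_zero_of_hasDerivAt_of_eq_zero hG (a := 0) (b := π) (by fun_prop)
    (by simp) (by simp)
  rw [integral_add ((intervalIntegrable_sin_pow_mul_cos_mul_pow a (b + 1)).const_mul _)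
      ((intervalIntegrable_sin_pow_mul_pow (a + 1) b).const_mul _),
    integral_const_mul, integral_const_mul] at h
  rw [sinCosMoment, sinMoment]
  linarith

lemma succ_mul_sinMoment_succ (a b : ℕ) :
    (a + 1) * sinMoment a (b + 1)
      = (a + 2) * sinMoment (a + 2) (b + 1) - (b + 1) * sinCosMoment (a + 1) b := by
  have hF : ∀ x, HasDerivAt (fun x => sin x ^ (a + 1) * cos x * x ^ (b + 1))
      (((a : ℝ) + 1) * (sin x ^ a * x ^ (b + 1))
        - ((a : ℝ) + 2) * (sin x ^ (a + 2) * x ^ (b + 1))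
        + (b + 1) * (sin x ^ (a + 1) * cos x * x ^ b)) x := by
    intro x
    refine (((hasDerivAt_sin_pow_succ a x).fun_mul (hasDerivAt_cos x)).fun_mul
      (hasDerivAt_pow (b + 1) x)).congr_deriv ?_
    push_cast
    linear_combination ((a : ℝ) + 1) * sin x ^ a * x ^ (b + 1) * Real.cos_sq' x
  have h := integral_eq_zero_of_hasDerivAt_of_eq_zero hF (a := 0) (b := π) (by fun_prop)
    (by simp) (by simp)
  rw [integral_add (((intervalIntegrable_sin_pow_mul_pow a (b + 1)).const_mul _).sub
      ((intervalIntegrable_sin_pow_mul_pow (a + 2) (b + 1)).const_mul _))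
      ((intervalIntegrable_sin_pow_mul_cos_mul_pow (a + 1) b).const_mul _),
    integral_sub ((intervalIntegrable_sin_pow_mul_pow a (b + 1)).const_mul _)
      ((intervalIntegrable_sin_pow_mul_pow (a + 2) (b + 1)).const_mul _),
    integral_const_mul, integral_const_mul, integral_const_mul] at h
  rw [sinCosMoment, sinMoment, sinMoment]
  linarith

theorem sinMoment_recurrence (l m : ℕ) :
    ((l : ℝ) + 2) * (l + 1) * sinMoment l (m + 2)
      = ((l : ℝ) + 2) ^ 2 * sinMoment (l + 2) (m + 2)
        + ((m : ℝ) + 2) * (m + 1) * sinMoment (l + 2) m := by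
  have h₁ := succ_mul_sinMoment_succ l (m + 1)
  have h₂ := succ_mul_sinCosMoment_succ (l + 1) m
  push_cast at h₁ h₂
  linear_combination ((l : ℝ) + 2) * h₁ - ((m : ℝ) + 2) * h₂

lemma B_eq_sinMoment (j m : ℕ) : B (j + m + 1) (j + 1) = sinMoment j m / (j ! * m !) := by
  rw [B, sinMoment, show j + m + 1 - (j + 1) = m by omega, Nat.add_sub_cancel]
  ring

theorem B_recurrence_general (n k : ℕ) (hk : 3 ≤ k) (hkn : k ≤ n) :
    B n (k - 2) - B n k = ((k : ℝ) - 1) ^ 2 * B (n + 2) k := by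
  obtain ⟨l, rfl⟩ : ∃ l, k = l + 3 := ⟨k - 3, by omega⟩
  obtain ⟨m, rfl⟩ : ∃ m, n = l + m + 3 := ⟨n - (l + 3), by omega⟩
  have hB₁ : B (l + m + 3) (l + 3 - 2) = sinMoment l (m + 2) / (l ! * (m + 2)!) := by
    convert B_eq_sinMoment l (m + 2) using 2 <;> omega
  have hB₂ : B (l + m + 3) (l + 3) = sinMoment (l + 2) m / ((l + 2)! * m !) := by
    convert B_eq_sinMoment (l + 2) m using 2; omega
  have hB₃ : B (l + m + 3 + 2) (l + 3) = sinMoment (l + 2) (m + 2) / ((l + 2)! * (m + 2)!) := by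
    convert B_eq_sinMoment (l + 2) (m + 2) using 2; omega
  rw [hB₁, hB₂, hB₃]
  simp only [Nat.factorial_succ]
  push_cast
  field_simp
  linear_combination sinMoment_recurrence l m

theorem B_recurrence (n k : ℕ) (hn : 1 ≤ n) (hk : 3 ≤ k) (hkn : k ≤ n) :
    B n (k - 2) - B n k = ((k : ℝ) - 1) ^ 2 * B (n + 2) k :=
  B_recurrence_general n k hk hkn
end

section
/- For all d ≥ 1 and k ∈ ℕ with 1 ≤ k, the normalized integral B{n,k} := (1/((k-1)!(n-k)!))∫₀^π (sin x)^(k-1) x^(n-k) dx satisfies lim_{n→∞} B{n,k}/(π^n/n!) = 1 for each fixed k. -/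
open Real Filter

/-!
On `[0, π]` the value `sin x = sin (π - x)` lies between `(π - x) - (π - x) ^ 3 / 6` and `π - x`,
so `sin x ^ a` is squeezed between `(π - x) ^ a - a / 6 * (π - x) ^ (a + 2)` and `(π - x) ^ a`.
Against `x ^ b` both bounds integrate to Beta integrals
`∫ x in 0..π, (π - x) ^ a * x ^ b = π ^ (a + b + 1) * a! * b! / (a + b + 1)!`.
With `k = a + 1` and `n = a + b + 1` the upper bound normalizes to exactly `π ^ n / n!`,
and the correction term is smaller by a factor `O(1 / n ^ 2)`.
-/

open intervalIntegral

theorem integral_sub_pow_mul_pow_succ (L : ℝ) (a b : ℕ) :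
    ∫ x in (0)..L, (L - x) ^ a * x ^ (b + 1) =
      (b + 1) / (a + 1) * ∫ x in (0)..L, (L - x) ^ (a + 1) * x ^ b := by
  have hv : ∀ x, HasDerivAt (fun y => -(L - y) ^ (a + 1) / (a + 1)) ((L - x) ^ a) x := fun x => by
    refine ((((hasDerivAt_id' x).const_sub L).fun_pow (a + 1)).fun_neg.div_const
      ((a : ℝ) + 1)).congr_deriv ?_
    field_simp
    simp
  have hu : ∀ x, HasDerivAt (fun y : ℝ => y ^ (b + 1)) ((b + 1) * x ^ b) x := fun x => by
    simpa using hasDerivAt_pow (b + 1) x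
  have ibp := integral_mul_deriv_eq_deriv_mul (a := 0) (b := L) (fun x _ => hu x)
    (fun x _ => hv x) (by apply Continuous.intervalIntegrable; fun_prop)
    (by apply Continuous.intervalIntegrable; fun_prop)
  simp only [sub_self, sub_zero, ne_eq, Nat.add_eq_zero_iff, one_ne_zero, and_false,
    not_false_eq_true, zero_pow, neg_zero, zero_div, mul_zero, zero_mul, zero_sub,
    ← integral_neg] at ibp
  simp only [mul_comm _ (_ ^ (b + 1)), ibp, ← integral_const_mul]
  congr 1 with x
  ring

theorem integral_sub_pow_mul_pow (L : ℝ) (a b : ℕ) :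
    ∫ x in (0)..L, (L - x) ^ a * x ^ b =
      L ^ (a + b + 1) * a.factorial * b.factorial / (a + b + 1).factorial := by
  induction b generalizing a with
  | zero =>
    simp [integral_comp_sub_left (fun x => x ^ a), Nat.factorial_succ]
    field_simp
  | succ b ih =>
    rw [integral_sub_pow_mul_pow_succ, ih, show a + 1 + b + 1 = a + (b + 1) + 1 by ring]
    push_cast [Nat.factorial_succ]
    field_simp

theorem pow_sub_mul_sub_le_pow {α : Type*} [CommRing α] [LinearOrder α] [IsStrictOrderedRing α]
    {a b : α} (hb : 0 ≤ b) (hba : b ≤ a) (m : ℕ) :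
    a ^ m - m * a ^ (m - 1) * (a - b) ≤ b ^ m := by
  have h := (le_abs_self _).trans (abs_pow_sub_pow_le a b m)
  rw [abs_of_nonneg (sub_nonneg.2 hba), abs_of_nonneg (hb.trans hba), abs_of_nonneg hb,
    max_eq_left hba] at h
  linarith

theorem pow_sub_mul_pow_add_two_le_sin_pow {y : ℝ} (h0 : 0 ≤ y) (hπ : y ≤ π) (m : ℕ) :
    y ^ m - m / 6 * y ^ (m + 2) ≤ sin y ^ m := by
  calc y ^ m - m / 6 * y ^ (m + 2) = y ^ m - m * y ^ (m - 1) * (y ^ 3 / 6) := by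
        rcases m with _ | m
        · simp
        · simp only [Nat.add_sub_cancel]; push_cast; ring
    _ ≤ y ^ m - m * y ^ (m - 1) * (y - sin y) := by gcongr; linarith [sin_ge_sub_cube h0]
    _ ≤ sin y ^ m := pow_sub_mul_sub_le_pow (sin_nonneg_of_nonneg_of_le_pi h0 hπ) (sin_le h0) m

theorem integral_sin_pow_mul_pow_le (a b : ℕ) :
    ∫ x in (0)..π, sin x ^ a * x ^ b ≤ ∫ x in (0)..π, (π - x) ^ a * x ^ b := by
  refine integral_mono_on pi_pos.le (by apply Continuous.intervalIntegrable; fun_prop)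
    (by apply Continuous.intervalIntegrable; fun_prop) fun x ⟨hx0, hxπ⟩ => ?_
  rw [← sin_pi_sub]
  gcongr
  · exact sin_nonneg_of_nonneg_of_le_pi (by linarith) (by linarith)
  · exact sin_le (by linarith)

theorem integral_sub_pow_mul_pow_sub_le_integral_sin_pow_mul_pow (a b : ℕ) :
    (∫ x in (0)..π, (π - x) ^ a * x ^ b) - a / 6 * ∫ x in (0)..π, (π - x) ^ (a + 2) * x ^ b ≤
      ∫ x in (0)..π, sin x ^ a * x ^ b := by
  rw [← integral_const_mul, ← integral_sub (by apply Continuous.intervalIntegrable; fun_prop)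
    (by apply Continuous.intervalIntegrable; fun_prop)]
  refine integral_mono_on pi_pos.le (by apply Continuous.intervalIntegrable; fun_prop)
    (by apply Continuous.intervalIntegrable; fun_prop) fun x ⟨hx0, hxπ⟩ => ?_
  calc (π - x) ^ a * x ^ b - a / 6 * ((π - x) ^ (a + 2) * x ^ b)
      = ((π - x) ^ a - a / 6 * (π - x) ^ (a + 2)) * x ^ b := by ring
    _ ≤ sin x ^ a * x ^ b := by
      rw [← sin_pi_sub]
      gcongr
      exact pow_sub_mul_pow_add_two_le_sin_pow (by linarith) (by linarith) a

theorem B_div_eq (a b : ℕ) :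
    B (b + (a + 1)) (a + 1) / (π ^ (b + (a + 1)) / (b + (a + 1)).factorial) =
      (∫ x in (0)..π, sin x ^ a * x ^ b) / ∫ x in (0)..π, (π - x) ^ a * x ^ b := by
  rw [B, integral_sub_pow_mul_pow, Nat.add_sub_cancel, Nat.add_sub_cancel,
    show a + b + 1 = b + (a + 1) by ring]
  field_simp

theorem B_div_le_one (a b : ℕ) :
    B (b + (a + 1)) (a + 1) / (π ^ (b + (a + 1)) / (b + (a + 1)).factorial) ≤ 1 := by
  rw [B_div_eq]
  refine div_le_one_of_le₀ (integral_sin_pow_mul_pow_le a b) ?_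
  rw [integral_sub_pow_mul_pow]
  positivity

theorem one_sub_div_le_B_div (a b : ℕ) :
    1 - a * (a + 1) * (a + 2) * π ^ 2 / 6 /
        ((((b + (a + 1) : ℕ) : ℝ) + 1) * (((b + (a + 1) : ℕ) : ℝ) + 2)) ≤
      B (b + (a + 1)) (a + 1) / (π ^ (b + (a + 1)) / (b + (a + 1)).factorial) := by
  have hβ : 0 < ∫ x in (0)..π, (π - x) ^ a * x ^ b := by
    rw [integral_sub_pow_mul_pow]
    positivity
  rw [B_div_eq, le_div_iff₀ hβ]
  refine le_trans (le_of_eq ?_) (integral_sub_pow_mul_pow_sub_le_integral_sin_pow_mul_pow a b)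
  rw [integral_sub_pow_mul_pow, integral_sub_pow_mul_pow,
    show a + 2 + b + 1 = a + b + 1 + 1 + 1 by ring]
  push_cast [Nat.factorial_succ, show b + (a + 1) = a + b + 1 by ring]
  field_simp
  ring

theorem tendsto_one_sub_div_add_one_mul_add_two (c : ℝ) :
    Tendsto (fun n : ℕ => 1 - c / (((n : ℝ) + 1) * ((n : ℝ) + 2))) atTop (nhds 1) := by
  have h : Tendsto (fun n : ℕ => ((n : ℝ) + 1) * ((n : ℝ) + 2)) atTop atTop :=
    (tendsto_atTop_add_const_right _ 1 tendsto_natCast_atTop_atTop).atTop_mul_atTop₀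
      (tendsto_atTop_add_const_right _ 2 tendsto_natCast_atTop_atTop)
  simpa using (tendsto_const_nhds (x := c)).div_atTop h |>.const_sub 1

theorem B_asymptotics (k : ℕ) (hk : 1 ≤ k) :
    Tendsto (fun n : ℕ => B n k / (π ^ n / (n.factorial : ℝ))) atTop (nhds 1) := by
  obtain ⟨a, rfl⟩ : ∃ a, k = a + 1 := ⟨k - 1, by omega⟩
  rw [← tendsto_add_atTop_iff_nat (a + 1)]
  exact tendsto_of_tendsto_of_tendsto_of_le_of_le
    ((tendsto_one_sub_div_add_one_mul_add_two _).comp (tendsto_add_atTop_nat (a + 1)))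
    tendsto_const_nhds (one_sub_div_le_B_div a) (B_div_le_one a)
end
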